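/- arXiv:2505.24364 — 2 statements merged into one kernel-verified Lean document; each statement's English description precedes it below -/
import Mathlib

section
/- Let n ≥ 3 be an integer and let f₃, f₄, …, f_n be nonnegative real numbers satisfying ∑_{i=3}^{n} (i − 2)·fᵢ = 2n − 4 and ∑_{i=3}^{n} (i − 6)·fᵢ ≤ −12. Then (3/2)·f₃ + 4·f₄ + (15/2)·f₅ + ∑_{i=6}^{n} ((7/2)·i − 9)·fᵢ ≤ 6n − 12. -/
/-- The counting core of the bound that an `n`-vertex `5`-planar polyhedral
`h`-framed graph has at most `6n - 12` edges: if `f i` (for `3 ≤ i ≤ n`) are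
nonnegative reals (the numbers of faces of size `i`, with `f i = 0` for `i > n`)
with `∑ (i-2) fᵢ = 2n - 4` and `∑ (i-6) fᵢ ≤ -12`, then
`(3/2) f₃ + 4 f₄ + (15/2) f₅ + ∑_{i=6}^n ((7/2) i - 9) fᵢ ≤ 6n - 12`. -/
theorem polyhedral_framed_counting (n : ℕ) (hn : 3 ≤ n) (f : ℕ → ℝ)
    (hnonneg : ∀ i ∈ Finset.Icc 3 n, 0 ≤ f i)
    (hzero : ∀ i, n < i → f i = 0)
    (h1 : ∑ i ∈ Finset.Icc 3 n, ((i : ℝ) - 2) * f i = 2 * (n : ℝ) - 4)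
    (h2 : ∑ i ∈ Finset.Icc 3 n, ((i : ℝ) - 6) * f i ≤ -12) :
    (3 / 2) * f 3 + 4 * f 4 + (15 / 2) * f 5
      + ∑ i ∈ Finset.Icc 6 n, ((7 / 2) * (i : ℝ) - 9) * f i ≤ 6 * (n : ℝ) - 12 := by
  have hsplit : ∑ i ∈ Finset.Icc 3 n, ((7 / 2) * (i : ℝ) - 9) * f i
      = 3 * (∑ i ∈ Finset.Icc 3 n, ((i : ℝ) - 2) * f i)
        + (1 / 2) * (∑ i ∈ Finset.Icc 3 n, ((i : ℝ) - 6) * f i) := by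
    rw [Finset.mul_sum, Finset.mul_sum, ← Finset.sum_add_distrib]
    exact Finset.sum_congr rfl fun i _ => by ring
  have hbound : ∑ i ∈ Finset.Icc 3 n, ((7 / 2) * (i : ℝ) - 9) * f i ≤ 6 * (n : ℝ) - 18 := by
    rw [hsplit, h1]; linarith
  have hstep : (3 / 2) * f 3 + 4 * f 4 + (15 / 2) * f 5
      + ∑ i ∈ Finset.Icc 6 n, ((7 / 2) * (i : ℝ) - 9) * f i
      ≤ ∑ i ∈ Finset.Icc 3 n, ((7 / 2) * (i : ℝ) - 9) * f i := by
    rcases le_or_gt 6 n with h6 | h6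
    · have : Finset.Icc 3 n = {3, 4, 5} ∪ Finset.Icc 6 n := by
        ext i
        simp only [Finset.mem_Icc, Finset.mem_union, Finset.mem_insert,
          Finset.mem_singleton]
        omega
      rw [this, Finset.sum_union (by
        simp only [Finset.disjoint_left, Finset.mem_insert, Finset.mem_singleton,
          Finset.mem_Icc]
        rintro i (rfl | rfl | rfl) <;> omega)]
      have h3 : (0:ℝ) ≤ f 3 := hnonneg 3 (by simp; omega)
      have h4 : (0:ℝ) ≤ f 4 := hnonneg 4 (by simp; omega)
      have h5 : (0:ℝ) ≤ f 5 := hnonneg 5 (by simp; omega)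
      rw [show ({3,4,5} : Finset ℕ) = insert 3 (insert 4 {5}) from rfl,
        Finset.sum_insert (by simp), Finset.sum_insert (by simp), Finset.sum_singleton]
      push_cast
      linarith
    · interval_cases n
      · have h4 : f 4 = 0 := hzero 4 (by norm_num)
        have h5 : f 5 = 0 := hzero 5 (by norm_num)
        rw [show Finset.Icc 3 3 = {3} by rfl, show Finset.Icc 6 3 = ∅ by rfl]
        simp [h4, h5]
        norm_num
      · have h4 : (0:ℝ) ≤ f 4 := hnonneg 4 (by simp)
        have h5 : f 5 = 0 := hzero 5 (by norm_num)
        rw [show Finset.Icc 3 4 = {3, 4} from rfl, show Finset.Icc 6 4 = ∅ from rfl]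
        simp [h5]
        norm_num
        linarith
      · have h4 : (0:ℝ) ≤ f 4 := hnonneg 4 (by simp)
        have h5 : (0:ℝ) ≤ f 5 := hnonneg 5 (by simp)
        rw [show Finset.Icc 3 5 = {3, 4, 5} from rfl, show Finset.Icc 6 5 = ∅ from rfl]
        simp
        norm_num
        linarith
  linarith
end

section
/- For every integer x ≥ 1 there exists a simple outer 6-planar graph on n = 5x + 2 vertices with at least 4(n − 2) = 20x edges. That is, there exist outer 6-planar graphs with n vertices and 4(n − 2) edges. -/
/-- `x` lies strictly between `a` and `b` in the cyclic order of `Fin n`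
(going forward from `a` to `b` along the cycle). -/
def cycBtw (n : ℕ) (a b x : Fin n) : Prop :=
  0 < (x.val + n - a.val) % n ∧ (x.val + n - a.val) % n < (b.val + n - a.val) % n

/-- Two edges `e` and `f` cross in the cyclic order determined by the positions `σ`:
they have four distinct endpoints and the endpoints interleave, i.e. exactly one
endpoint of `f` lies strictly between the endpoints of `e`. -/
def crossing (n : ℕ) (σ : Fin n → Fin n) (e f : Sym2 (Fin n)) : Prop :=
  ∃ a b c d : Fin n, e = s(a, b) ∧ f = s(c, d) ∧
    a ≠ b ∧ c ≠ d ∧ a ≠ c ∧ a ≠ d ∧ b ≠ c ∧ b ≠ d ∧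
    (cycBtw n (σ a) (σ b) (σ c) ↔ ¬ cycBtw n (σ a) (σ b) (σ d))

/-- With respect to the cyclic order given by positions `σ`, every edge of `G`
is crossed by at most `k` other edges. -/
def OuterKPlanarOrd (n k : ℕ) (σ : Fin n → Fin n) (G : SimpleGraph (Fin n)) : Prop :=
  ∀ e ∈ G.edgeSet, ({f ∈ G.edgeSet | crossing n σ e f}).ncard ≤ k

/-- `G` is outer `k`-planar: its vertices can be arranged in a cyclic order such
that every edge is crossed by at most `k` other edges. -/
def IsOuterKPlanar (n k : ℕ) (G : SimpleGraph (Fin n)) : Prop :=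
  ∃ σ : Fin n ≃ Fin n, OuterKPlanarOrd n k (⇑σ) G


lemma modHelper (n a w : ℕ) (ha : a < n) (hw : w < n) :
    (w + n - a) % n = if a ≤ w then w - a else w + n - a := by
  split_ifs with h
  · have h2 : w + n - a = (w - a) + n := by omega
    rw [h2, Nat.add_mod_right, Nat.mod_eq_of_lt (by omega)]
  · exact Nat.mod_eq_of_lt (by omega)

lemma cycBtw_iff {n : ℕ} {a b : Fin n} (hab : a.val < b.val) (w : Fin n) :
    cycBtw n a b w ↔ (a.val < w.val ∧ w.val < b.val) := by
  have ha := a.isLt; have hb := b.isLt; have hw := w.isLt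
  unfold cycBtw
  rw [modHelper n a.val w.val (by omega) hw, modHelper n a.val b.val (by omega) hb]
  split_ifs <;> omega

lemma cycBtw_iff' {n : ℕ} {a b : Fin n} (hab : b.val < a.val) (w : Fin n) :
    cycBtw n a b w ↔ (a.val < w.val ∨ w.val < b.val) := by
  have ha := a.isLt; have hb := b.isLt; have hw := w.isLt
  unfold cycBtw
  rw [modHelper n a.val w.val (by omega) hw, modHelper n a.val b.val (by omega) hb]
  split_ifs <;> omega

lemma crossing_iff {n : ℕ} {u v : Fin n} (huv : u.val < v.val) (f : Sym2 (Fin n)) :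
    crossing n id s(u, v) f ↔
      ∃ c d : Fin n, f = s(c, d) ∧ c ≠ d ∧ c ≠ u ∧ c ≠ v ∧ d ≠ u ∧ d ≠ v ∧
        (u.val < c.val ∧ c.val < v.val) ∧ ¬(u.val < d.val ∧ d.val < v.val) := by
  have vne : ∀ {p q : Fin n}, p ≠ q → p.val ≠ q.val := fun h hh => h (Fin.ext hh)
  constructor
  · rintro ⟨a, b, c, d, he, rfl, hab, hcd, hac, had, hbc, hbd, hiff⟩
    simp only [id_eq] at hiff
    rcases Sym2.eq_iff.mp he with ⟨rfl, rfl⟩ | ⟨rfl, rfl⟩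
    · rw [cycBtw_iff huv, cycBtw_iff huv] at hiff
      by_cases hin : u.val < c.val ∧ c.val < v.val
      · exact ⟨c, d, rfl, hcd, hac.symm, hbc.symm, had.symm, hbd.symm, hin, hiff.mp hin⟩
      · have hdin : u.val < d.val ∧ d.val < v.val := by tauto
        exact ⟨d, c, Sym2.eq_swap, hcd.symm, had.symm, hbd.symm, hac.symm, hbc.symm, hdin, hin⟩
    · rw [cycBtw_iff' huv, cycBtw_iff' huv] at hiff
      have h1 := vne hac; have h2 := vne had; have h3 := vne hbc; have h4 := vne hbd
      by_cases hin : u.val < c.val ∧ c.val < v.val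
      · exact ⟨c, d, rfl, hcd, hbc.symm, hac.symm, hbd.symm, had.symm, hin, by omega⟩
      · have hdin : u.val < d.val ∧ d.val < v.val := by omega
        exact ⟨d, c, Sym2.eq_swap, hcd.symm, hbd.symm, had.symm, hbc.symm, hac.symm, hdin, hin⟩
  · rintro ⟨c, d, rfl, hcd, hcu, hcv, hdu, hdv, hcin, hdin⟩
    have huv' : u ≠ v := fun h => absurd huv (by rw [h]; exact lt_irrefl _)
    refine ⟨u, v, c, d, rfl, rfl, huv', hcd, hcu.symm, hdu.symm, hcv.symm, hdv.symm, ?_⟩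
    simp only [id_eq]
    rw [cycBtw_iff huv, cycBtw_iff huv]
    exact iff_of_true hcin hdin

-- graph construction
def inFace (i u : ℕ) : Prop := u = 0 ∨ (5*i+1 ≤ u ∧ u ≤ 5*i+6)

def myG (n : ℕ) : SimpleGraph (Fin n) where
  Adj u v := u ≠ v ∧ ∃ i : ℕ, inFace i u.val ∧ inFace i v.val
  symm := ⟨by rintro u v ⟨h1, i, h2, h3⟩; exact ⟨h1.symm, i, h3, h2⟩⟩
  loopless := ⟨fun u h => h.1 rfl⟩

lemma mul_le_six {a b : ℕ} (h : a + b ≤ 5) : a * b ≤ 6 := by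
  have ha : a ≤ 5 := by omega
  interval_cases a <;> omega

lemma subset_bound {n : ℕ} (hn : 0 < n) (S : Set (Sym2 (Fin n))) (A B : Finset ℕ)
    (hS : ∀ f ∈ S, ∃ c d : Fin n, f = s(c, d) ∧ c.val ∈ A ∧ d.val ∈ B)
    (hcard : A.card * B.card ≤ 6) : S.ncard ≤ 6 := by
  set T := (A ×ˢ B).image
    (fun p : ℕ × ℕ => s((⟨p.1 % n, Nat.mod_lt _ hn⟩ : Fin n), (⟨p.2 % n, Nat.mod_lt _ hn⟩ : Fin n)))
    with hT
  have hsub : S ⊆ ↑T := by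
    intro f hf
    obtain ⟨c, d, rfl, hc, hd⟩ := hS f hf
    apply Finset.mem_coe.mpr
    refine Finset.mem_image.mpr ⟨(c.val, d.val), Finset.mem_product.mpr ⟨hc, hd⟩, ?_⟩
    have hc' : (⟨c.val % n, Nat.mod_lt _ hn⟩ : Fin n) = c := Fin.ext (Nat.mod_eq_of_lt c.isLt)
    have hd' : (⟨d.val % n, Nat.mod_lt _ hn⟩ : Fin n) = d := Fin.ext (Nat.mod_eq_of_lt d.isLt)
    rw [hc', hd']
  calc S.ncard ≤ (↑T : Set (Sym2 (Fin n))).ncard := Set.ncard_le_ncard hsub T.finite_toSet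
    _ = T.card := Set.ncard_coe_finset T
    _ ≤ (A ×ˢ B).card := Finset.card_image_le
    _ = A.card * B.card := Finset.card_product A B
    _ ≤ 6 := hcard

lemma crossing_card (x : ℕ) (u v : Fin (5*x+2)) (huv : u.val < v.val)
    (hadj : (myG (5*x+2)).Adj u v) :
    {f ∈ (myG (5*x+2)).edgeSet | crossing (5*x+2) id s(u, v) f}.ncard ≤ 6 := by
  have hn : 0 < 5*x+2 := by omega
  have vne : ∀ {p q : Fin (5*x+2)}, p ≠ q → p.val ≠ q.val := fun h hh => h (Fin.ext hh)
  obtain ⟨-, i, hu, hv⟩ := hadj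
  have hvi : 5*i+1 ≤ v.val ∧ v.val ≤ 5*i+6 := by
    rcases hv with h | h
    · omega
    · exact h
  by_cases hu0 : u.val = 0
  · -- e = {0, v}
    apply subset_bound hn _ (Finset.Icc (v.val - (v.val-1) % 5) (v.val - 1))
      (Finset.Icc (v.val + 1) (v.val + 5 - (v.val-1) % 5))
    · rintro f ⟨hfe, hfc⟩
      rw [crossing_iff huv] at hfc
      obtain ⟨c, d, rfl, hcd, hcu, hcv, hdu, hdv, hcin, hdin⟩ := hfc
      obtain ⟨-, j, hcj, hdj⟩ := ((myG (5*x+2)).mem_edgeSet).mp hfe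
      have hc0 : c.val ≠ 0 := by omega
      have hd0 : d.val ≠ 0 := by have := vne hdu; omega
      have hdv' := vne hdv
      have hcj' : 5*j+1 ≤ c.val ∧ c.val ≤ 5*j+6 := by rcases hcj with h | h <;> omega
      have hdj' : 5*j+1 ≤ d.val ∧ d.val ≤ 5*j+6 := by rcases hdj with h | h <;> omega
      exact ⟨c, d, rfl, Finset.mem_Icc.mpr (by omega), Finset.mem_Icc.mpr (by omega)⟩
    · rw [Nat.card_Icc, Nat.card_Icc]
      exact mul_le_six (by omega)
  · -- both endpoints in the interval of face i
    have hui : 5*i+1 ≤ u.val ∧ u.val ≤ 5*i+6 := by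
      rcases hu with h | h
      · omega
      · exact h
    apply subset_bound hn _ (Finset.Icc (u.val + 1) (v.val - 1))
      (insert 0 (Finset.Icc (5*i+1) (u.val - 1) ∪ Finset.Icc (v.val + 1) (5*i+6)))
    · rintro f ⟨hfe, hfc⟩
      rw [crossing_iff huv] at hfc
      obtain ⟨c, d, rfl, hcd, hcu, hcv, hdu, hdv, hcin, hdin⟩ := hfc
      obtain ⟨-, j, hcj, hdj⟩ := ((myG (5*x+2)).mem_edgeSet).mp hfe
      have hcj' : 5*j+1 ≤ c.val ∧ c.val ≤ 5*j+6 := by rcases hcj with h | h <;> omega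
      have hji : j = i := by omega
      subst hji
      have hdu' := vne hdu; have hdv' := vne hdv
      refine ⟨c, d, rfl, Finset.mem_Icc.mpr (by omega), ?_⟩
      simp only [Finset.mem_insert, Finset.mem_union, Finset.mem_Icc]
      rcases hdj with h | h
      · exact Or.inl h
      · right; omega
    · have hB : (insert 0 (Finset.Icc (5*i+1) (u.val - 1) ∪ Finset.Icc (v.val + 1) (5*i+6))).card
          ≤ 1 + ((u.val - 1) + 1 - (5*i+1)) + ((5*i+6) + 1 - (v.val+1)) := by
        refine le_trans (Finset.card_insert_le _ _) ?_
        have h2 := Finset.card_union_le (Finset.Icc (5*i+1) (u.val - 1)) (Finset.Icc (v.val + 1) (5*i+6))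
        rw [Nat.card_Icc, Nat.card_Icc] at h2
        omega
      refine le_trans (Nat.mul_le_mul (le_of_eq (Nat.card_Icc _ _)) hB) (mul_le_six (by omega))

def vert (x i j : ℕ) : Fin (5*x+2) :=
  ⟨(if j = 0 then 0 else 5*i+j) % (5*x+2), Nat.mod_lt _ (by omega)⟩

lemma vert_val (x i j : ℕ) (hi : i < x) (hj : j ≤ 6) :
    (vert x i j).val = if j = 0 then 0 else 5*i+j := by
  show (if j = 0 then 0 else 5*i+j) % (5*x+2) = _
  apply Nat.mod_eq_of_lt
  split_ifs <;> omega

lemma edge_count (x : ℕ) : 20 * x ≤ (myG (5*x+2)).edgeSet.ncard := by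
  classical
  set P : Finset (ℕ × ℕ) :=
    (Finset.range 7 ×ˢ Finset.range 7).filter (fun p => p.1 < p.2 ∧ ¬(p.1 = 0 ∧ p.2 = 1)) with hPdef
  have hP : P.card = 20 := by decide
  set D : Finset (ℕ × (ℕ × ℕ)) := Finset.range x ×ˢ P with hDdef
  set φ : ℕ × (ℕ × ℕ) → Sym2 (Fin (5*x+2)) :=
    fun q => s(vert x q.1 q.2.1, vert x q.1 q.2.2) with hφ
  have hmem : ∀ q ∈ D, q.1 < x ∧ q.2.1 < q.2.2 ∧ q.2.2 ≤ 6 ∧ ¬(q.2.1 = 0 ∧ q.2.2 = 1) := by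
    intro q hq
    simp only [hDdef, hPdef, Finset.mem_product, Finset.mem_range, Finset.mem_filter] at hq
    omega
  have hinj : Set.InjOn φ ↑D := by
    rintro ⟨i, j, k⟩ hq ⟨i', j', k'⟩ hq' heq
    obtain ⟨hi, hjk, hk, hex⟩ := hmem _ hq
    obtain ⟨hi', hjk', hk', hex'⟩ := hmem _ hq'
    dsimp only at hi hjk hk hex hi' hjk' hk' hex'
    have : i = i' ∧ j = j' ∧ k = k' := by
      rcases Sym2.eq_iff.mp heq with ⟨ha, hb⟩ | ⟨ha, hb⟩ <;>
      · have ha' := congrArg Fin.val ha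
        have hb' := congrArg Fin.val hb
        simp only [vert_val x i j hi (by omega), vert_val x i k hi (by omega),
          vert_val x i' j' hi' (by omega), vert_val x i' k' hi' (by omega)] at ha' hb'
        split_ifs at ha' hb' <;> omega
    obtain ⟨rfl, rfl, rfl⟩ := this
    rfl
  have hsub : ↑(D.image φ) ⊆ (myG (5*x+2)).edgeSet := by
    intro f hf
    simp only [Finset.coe_image, Set.mem_image, Finset.mem_coe] at hf
    obtain ⟨⟨i, j, k⟩, hq, rfl⟩ := hf
    obtain ⟨hi, hjk, hk, hex⟩ := hmem _ hq
    dsimp only at hi hjk hk hex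
    rw [SimpleGraph.mem_edgeSet]
    refine ⟨?_, i, ?_, ?_⟩
    · intro h
      have h' := congrArg Fin.val h
      simp only [vert_val x i j hi (by omega), vert_val x i k hi (by omega)] at h'
      split_ifs at h' <;> omega
    · rw [inFace]; rw [vert_val x i j hi (by omega)]; split_ifs <;> omega
    · rw [inFace]; rw [vert_val x i k hi (by omega)]; split_ifs <;> omega
  calc 20 * x = D.card := by
        rw [hDdef, Finset.card_product, Finset.card_range, hP]; ring
    _ = (D.image φ).card := (Finset.card_image_of_injOn hinj).symm
    _ = (↑(D.image φ) : Set (Sym2 (Fin (5*x+2)))).ncard := (Set.ncard_coe_finset _).symm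
    _ ≤ (myG (5*x+2)).edgeSet.ncard := Set.ncard_le_ncard hsub (Set.toFinite _)

/-- For every `x ≥ 1` there exists an outer `6`-planar graph on `n = 5x + 2`
vertices with at least `4(n - 2) = 20x` edges. -/
theorem exists_dense_outer_six_planar (x : ℕ) (hx : 1 ≤ x) :
    ∃ G : SimpleGraph (Fin (5 * x + 2)), IsOuterKPlanar (5 * x + 2) 6 G ∧
      20 * x ≤ G.edgeSet.ncard := by
  refine ⟨myG (5 * x + 2), ⟨Equiv.refl _, ?_⟩, edge_count x⟩
  intro e
  induction e using Sym2.ind with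
  | _ u v =>
    intro he
    have hadj : (myG (5 * x + 2)).Adj u v := ((myG (5 * x + 2)).mem_edgeSet).mp he
    have hne : u.val ≠ v.val := fun h => hadj.ne (Fin.ext h)
    simp only [Equiv.coe_refl]
    rcases Nat.lt_or_ge u.val v.val with h | h
    · exact crossing_card x u v h hadj
    · have h' : v.val < u.val := by omega
      rw [Sym2.eq_swap (a := u) (b := v)]
      exact crossing_card x v u h' hadj.symm
end
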